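/- arXiv:1912.05068 — 2 statements merged into one kernel-verified Lean document; each statement's English description precedes it below -/
import Mathlib

section
/- Same support sets: suppose x ∈ ℝⁿ has γ_A(x) > 0 and a support set S ⊆ A, i.e. x = Σ_{a∈S} ĉ_a·a with ĉ_a > 0 and Σ_{a∈S} ĉ_a = γ_A(x). If v = Σ_{a∈S} c_a·a with c_a ≥ 0, then γ_A(v) = Σ_{a∈S} c_a. -/
open scoped RealInnerProductSpace

/-- The atomic gauge: infimum of `Σ c_a` over finitely supported conic decompositions
`x = Σ c_a • a` with atoms in `A` and `c_a ≥ 0`. -/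
noncomputable def atomicGauge {n : ℕ} (A : Set (EuclideanSpace ℝ (Fin n)))
    (x : EuclideanSpace ℝ (Fin n)) : EReal :=
  sInf {s : EReal | ∃ c : EuclideanSpace ℝ (Fin n) →₀ ℝ,
    (∀ a, 0 ≤ c a) ∧ ↑c.support ⊆ A ∧ (c.sum fun a r => r • a) = x ∧
      s = ((c.sum fun _ r => r : ℝ) : EReal)}

/- If `v` had a decomposition of weight `s < Σ c_a`, then for small `t > 0` the coefficients
`ĉ_a - t c_a` stay nonnegative, and `x = Σ (ĉ_a - t c_a) a + t v` would be a decomposition of `x`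
of weight `γ_A(x) - t (Σ c_a - s) < γ_A(x)`. -/

section ConicDecomposition

variable {E : Type*} [AddCommMonoid E] [Module ℝ E]

def IsConicDecomposition (A : Set E) (x : E) (d : E →₀ ℝ) : Prop :=
  (∀ a, 0 ≤ d a) ∧ ↑d.support ⊆ A ∧ (d.sum fun a r => r • a) = x

theorem IsConicDecomposition.add {A : Set E} {x y : E} {d e : E →₀ ℝ}
    (hd : IsConicDecomposition A x d) (he : IsConicDecomposition A y e) :
    IsConicDecomposition A (x + y) (d + e) := by
  classical
  obtain ⟨hd0, hdA, rfl⟩ := hd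
  obtain ⟨he0, heA, rfl⟩ := he
  refine ⟨fun a => add_nonneg (hd0 a) (he0 a), ?_, ?_⟩
  · intro a ha
    rcases Finset.mem_union.mp (Finsupp.support_add ha) with h | h
    exacts [hdA h, heA h]
  · exact Finsupp.sum_add_index' (fun a => zero_smul ℝ a) fun a r₁ r₂ => add_smul r₁ r₂ a

theorem IsConicDecomposition.smul {A : Set E} {x : E} {d : E →₀ ℝ}
    (hd : IsConicDecomposition A x d) {t : ℝ} (ht : 0 ≤ t) :
    IsConicDecomposition A (t • x) (t • d) := by
  obtain ⟨hd0, hdA, rfl⟩ := hd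
  refine ⟨fun a => mul_nonneg ht (hd0 a), fun a ha => hdA (Finsupp.support_smul ha), ?_⟩
  rw [Finsupp.sum_smul_index' fun a => zero_smul ℝ a, Finsupp.smul_sum]
  exact Finsupp.sum_congr fun a _ => mul_smul t (d a) a

theorem isConicDecomposition_indicator [DecidableEq E] {A : Set E} {S : Finset E} (hSA : ↑S ⊆ A) {c : E → ℝ}
    (hc : ∀ a ∈ S, 0 ≤ c a) :
    IsConicDecomposition A (∑ a ∈ S, c a • a) (Finsupp.indicator S fun a _ => c a) := by
  refine ⟨fun a => ?_, fun a ha => hSA (Finsupp.support_indicator_subset _ _ ha), ?_⟩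
  · rw [Finsupp.indicator_apply]
    split_ifs with ha
    exacts [hc a ha, le_rfl]
  · rw [Finsupp.sum_of_support_subset _ (Finsupp.support_indicator_subset _ _) _
      fun a _ => zero_smul ℝ a]
    exact Finset.sum_congr rfl fun a ha => by rw [Finsupp.indicator_of_mem ha]

end ConicDecomposition

section CoefficientSum

variable {ι : Type*}

theorem Finsupp.sum_id_add (d e : ι →₀ ℝ) :
    ((d + e).sum fun _ r => r) = (d.sum fun _ r => r) + e.sum fun _ r => r :=
  Finsupp.sum_add_index' (fun _ => rfl) fun _ _ _ => rfl

theorem Finsupp.sum_id_smul (t : ℝ) (d : ι →₀ ℝ) :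
    ((t • d).sum fun _ r => r) = t * d.sum fun _ r => r := by
  rw [Finsupp.sum_smul_index' fun _ => rfl, Finsupp.mul_sum]
  rfl

theorem Finsupp.sum_id_indicator [DecidableEq ι] (S : Finset ι) (c : ι → ℝ) :
    ((Finsupp.indicator S fun a _ => c a).sum fun _ r => r) = ∑ a ∈ S, c a := by
  rw [Finsupp.sum_of_support_subset _ (Finsupp.support_indicator_subset _ _) _ fun _ _ => rfl]
  exact Finset.sum_congr rfl fun a ha => by rw [Finsupp.indicator_of_mem ha]

theorem Finset.exists_pos_forall_mul_le {S : Finset ι} {c b : ι → ℝ} (hb : ∀ a ∈ S, 0 < b a) :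
    ∃ t > 0, ∀ a ∈ S, t * c a ≤ b a := by
  have hsmall : ∀ᶠ t in nhdsWithin (0 : ℝ) (Set.Ioi 0), ∀ a ∈ S, t * c a < b a := by
    refine (Filter.eventually_all_finset S).2 fun a ha => nhdsWithin_le_nhds ?_
    have hlim : Filter.Tendsto (fun t : ℝ => t * c a) (nhds 0) (nhds (0 * c a)) :=
      (continuous_mul_const (c a)).tendsto 0
    exact hlim.eventually (gt_mem_nhds (by simpa using hb a ha))
  obtain ⟨t, hlt, ht⟩ := (hsmall.and self_mem_nhdsWithin).exists
  exact ⟨t, ht, fun a ha => (hlt a ha).le⟩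

end CoefficientSum

section AtomicGauge

variable {n : ℕ} {A : Set (EuclideanSpace ℝ (Fin n))}

theorem atomicGauge_le_of_isConicDecomposition {x : EuclideanSpace ℝ (Fin n)}
    {d : EuclideanSpace ℝ (Fin n) →₀ ℝ} (hd : IsConicDecomposition A x d) :
    atomicGauge A x ≤ ((d.sum fun _ r => r : ℝ) : EReal) :=
  sInf_le ⟨d, hd.1, hd.2.1, hd.2.2, rfl⟩

theorem le_atomicGauge {x : EuclideanSpace ℝ (Fin n)} {b : EReal}
    (h : ∀ d, IsConicDecomposition A x d → b ≤ ((d.sum fun _ r => r : ℝ) : EReal)) :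
    b ≤ atomicGauge A x :=
  le_sInf fun _ ⟨d, hd0, hdA, hdx, hs⟩ => hs ▸ h d ⟨hd0, hdA, hdx⟩

theorem atomicGauge_finset_sum_le {S : Finset (EuclideanSpace ℝ (Fin n))} (hSA : ↑S ⊆ A)
    {c : EuclideanSpace ℝ (Fin n) → ℝ} (hc : ∀ a ∈ S, 0 ≤ c a) :
    atomicGauge A (∑ a ∈ S, c a • a) ≤ ((∑ a ∈ S, c a : ℝ) : EReal) := by
  simpa only [Finsupp.sum_id_indicator] using
    atomicGauge_le_of_isConicDecomposition (isConicDecomposition_indicator hSA hc)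

end AtomicGauge

theorem same_support_sets_general {n : ℕ} (A : Set (EuclideanSpace ℝ (Fin n)))
    (x v : EuclideanSpace ℝ (Fin n))
    (S : Finset (EuclideanSpace ℝ (Fin n))) (hSA : ↑S ⊆ A)
    (chat : EuclideanSpace ℝ (Fin n) → ℝ)
    (hchat : ∀ a ∈ S, 0 < chat a)
    (hxdec : (∑ a ∈ S, chat a • a) = x)
    (hxgauge : ((∑ a ∈ S, chat a : ℝ) : EReal) = atomicGauge A x)
    (c : EuclideanSpace ℝ (Fin n) → ℝ) (hc : ∀ a ∈ S, 0 ≤ c a)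
    (hv : (∑ a ∈ S, c a • a) = v) :
    atomicGauge A v = ((∑ a ∈ S, c a : ℝ) : EReal) := by
  classical
  refine le_antisymm (hv ▸ atomicGauge_finset_sum_le hSA hc) (le_atomicGauge fun d hd => ?_)
  obtain ⟨t, ht, htc⟩ := Finset.exists_pos_forall_mul_le (c := c) hchat
  have hx : IsConicDecomposition A x
      ((Finsupp.indicator S fun a _ => chat a - t * c a) + t • d) := by
    convert (isConicDecomposition_indicator hSA fun a ha => sub_nonneg.2 (htc a ha)).add
      (hd.smul ht.le) using 1
    simp only [← hxdec, hv, sub_smul, mul_smul, Finset.sum_sub_distrib,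
      ← Finset.smul_sum, sub_add_cancel]
  have hweight := hxgauge ▸ atomicGauge_le_of_isConicDecomposition hx
  rw [Finsupp.sum_id_add, Finsupp.sum_id_smul, Finsupp.sum_id_indicator,
    Finset.sum_sub_distrib, ← Finset.mul_sum, EReal.coe_le_coe_iff] at hweight
  exact EReal.coe_le_coe_iff.2 (le_of_mul_le_mul_left (by linarith) ht)

/-- Same support sets: if `S` is a support set for `x` (positive coefficients summing to the
gauge value), then any conic combination `v` of the atoms in `S` has gauge value equal to its
coefficient sum. -/
theorem same_support_sets {n : ℕ} (A : Set (EuclideanSpace ℝ (Fin n)))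
    (x v : EuclideanSpace ℝ (Fin n))
    (S : Finset (EuclideanSpace ℝ (Fin n))) (hSA : ↑S ⊆ A)
    (chat : EuclideanSpace ℝ (Fin n) → ℝ)
    (hchat : ∀ a ∈ S, 0 < chat a)
    (hxdec : (∑ a ∈ S, chat a • a) = x)
    (hxgauge : ((∑ a ∈ S, chat a : ℝ) : EReal) = atomicGauge A x)
    (hpos : (0 : EReal) < atomicGauge A x)
    (c : EuclideanSpace ℝ (Fin n) → ℝ) (hc : ∀ a ∈ S, 0 ≤ c a)
    (hv : (∑ a ∈ S, c a • a) = v) :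
    atomicGauge A v = ((∑ a ∈ S, c a : ℝ) : EReal) :=
  same_support_sets_general A x v S hSA chat hchat hxdec hxgauge c hc hv
end

section
/- Polar duality optimality: let C ⊆ ℝⁿ be a closed convex set containing the origin and D ⊆ ℝⁿ \ {0} a closed convex set with antipolar D' = {z : ⟨x, z⟩ ≥ 1 for all x ∈ D}. If x ∈ D, z ∈ D', ⟨x, z⟩ = 1, and ⟨x, z⟩ = γ_C(x)·σ_C(z), then x minimizes γ_C over D and z minimizes σ_C over D'. -/
/-!
Every `r` with `y ∈ r • C` gives the polar inequality `⟪y, w⟫ ≤ r * σ_C(w)`; for `y ∈ D` and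
`w ∈ D'` the left side is at least `1`, so `γ_C(y) ≥ 1 / σ_C(w)`. The alignment condition
`γ_C(x) σ_C(z) = ⟪x, z⟫ = 1` makes both values finite and positive with `γ_C(x) = 1 / σ_C(z)`,
so this weak-duality bound is attained at `(x, z)` on both sides.
-/

open scoped RealInnerProductSpace Pointwise

noncomputable def supportFn {n : ℕ} (C : Set (EuclideanSpace ℝ (Fin n)))
    (z : EuclideanSpace ℝ (Fin n)) : EReal :=
  sSup ((fun x => ((⟪x, z⟫ : ℝ) : EReal)) '' C)

noncomputable def gaugeE {n : ℕ} (C : Set (EuclideanSpace ℝ (Fin n)))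
    (x : EuclideanSpace ℝ (Fin n)) : EReal :=
  sInf ((fun r : ℝ => (r : EReal)) '' {r : ℝ | 0 ≤ r ∧ x ∈ r • C})

def antipolar {n : ℕ} (D : Set (EuclideanSpace ℝ (Fin n))) : Set (EuclideanSpace ℝ (Fin n)) :=
  {z | ∀ x ∈ D, 1 ≤ ⟪x, z⟫}

theorem EReal.exists_pos_eq_inv_of_mul_eq_one {a b : EReal} (ha : 0 ≤ a) (hab : a * b = 1) :
    ∃ s : ℝ, 0 < s ∧ a = (s⁻¹ : ℝ) ∧ b = s := by
  have htop : (⊤ : EReal) ≠ 1 := (EReal.coe_ne_top 1).symm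
  have hbot : (⊥ : EReal) ≠ 1 := (EReal.coe_ne_bot 1).symm
  induction a using EReal.rec with
  | bot => simp at ha
  | top =>
    induction b using EReal.rec with
    | bot => simp [hbot] at hab
    | top => simp [htop] at hab
    | coe s =>
      rcases lt_trichotomy s 0 with hs | rfl | hs
      · simp [EReal.top_mul_coe_of_neg hs, hbot] at hab
      · simp at hab
      · simp [EReal.top_mul_coe_of_pos hs, htop] at hab
  | coe g =>
    have hg : 0 ≤ g := EReal.coe_nonneg.1 ha
    induction b using EReal.rec with
    | bot => rcases hg.eq_or_lt with rfl | hg <;> simp [EReal.coe_mul_bot_of_pos, *] at hab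
    | top => rcases hg.eq_or_lt with rfl | hg <;> simp [EReal.coe_mul_top_of_pos, *] at hab
    | coe s =>
      have hgs : g * s = 1 := by exact_mod_cast hab
      have hs : 0 < s := pos_of_mul_pos_right (hgs ▸ one_pos) hg
      exact ⟨s, hs, by rw [eq_inv_of_mul_eq_one_left hgs], rfl⟩

section Polar

variable {n : ℕ} {C D : Set (EuclideanSpace ℝ (Fin n))}

theorem gaugeE_nonneg (x : EuclideanSpace ℝ (Fin n)) : 0 ≤ gaugeE C x := by
  refine le_sInf ?_
  rintro _ ⟨r, ⟨hr, -⟩, rfl⟩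
  exact EReal.coe_nonneg.2 hr

theorem inner_le_mul_of_mem_smul {u v : EuclideanSpace ℝ (Fin n)} {r b : ℝ} (hr : 0 ≤ r)
    (hu : u ∈ r • C) (hv : supportFn C v ≤ b) : ⟪u, v⟫ ≤ r * b := by
  obtain ⟨c, hc, rfl⟩ := hu
  have hcv : ((⟪c, v⟫ : ℝ) : EReal) ≤ supportFn C v := le_sSup ⟨c, hc, rfl⟩
  rw [real_inner_smul_left]
  exact mul_le_mul_of_nonneg_left (EReal.coe_le_coe_iff.1 (hcv.trans hv)) hr

theorem inv_le_gaugeE_of_mem_antipolar {y w : EuclideanSpace ℝ (Fin n)} {b : ℝ} (hb : 0 < b)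
    (hw : w ∈ antipolar D) (hwb : supportFn C w ≤ b) (hy : y ∈ D) :
    ((b⁻¹ : ℝ) : EReal) ≤ gaugeE C y := by
  refine le_sInf ?_
  rintro _ ⟨r, ⟨hr, hyr⟩, rfl⟩
  have hrb : 1 ≤ r * b := (hw y hy).trans (inner_le_mul_of_mem_smul hr hyr hwb)
  exact EReal.coe_le_coe_iff.2 ((inv_le_iff_one_le_mul₀ hb).2 hrb)

end Polar

theorem polar_duality_optimality_general {n : ℕ} (C : Set (EuclideanSpace ℝ (Fin n)))
    (D : Set (EuclideanSpace ℝ (Fin n)))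
    (x z : EuclideanSpace ℝ (Fin n)) (hx : x ∈ D) (hz : z ∈ antipolar D)
    (hip : ⟪x, z⟫ = 1)
    (halign : ((⟪x, z⟫ : ℝ) : EReal) = gaugeE C x * supportFn C z) :
    (∀ y ∈ D, gaugeE C x ≤ gaugeE C y) ∧ (∀ w ∈ antipolar D, supportFn C z ≤ supportFn C w) := by
  rw [hip, EReal.coe_one, eq_comm] at halign
  obtain ⟨s, hs, hγ, hσ⟩ := EReal.exists_pos_eq_inv_of_mul_eq_one (gaugeE_nonneg x) halign
  refine ⟨fun y hy => hγ ▸ inv_le_gaugeE_of_mem_antipolar hs hz hσ.le hy, fun w hw => ?_⟩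
  by_contra! hlt
  -- A real `b` strictly between `max (σ_C w) 0` and `σ_C z = s` would give `γ_C x ≥ b⁻¹ > s⁻¹`.
  obtain ⟨b, hwb, hbs⟩ :=
    EReal.lt_iff_exists_real_btwn.1 (max_lt hlt (hσ ▸ EReal.coe_pos.2 hs))
  have hb : 0 < b := EReal.coe_pos.1 <| (le_max_right _ _).trans_lt hwb
  have hγb := inv_le_gaugeE_of_mem_antipolar hb hw ((le_max_left _ _).trans hwb.le) hx
  rw [hγ, EReal.coe_le_coe_iff] at hγb
  exact (inv_strictAnti₀ hb (EReal.coe_lt_coe_iff.1 (hσ ▸ hbs))).not_ge hγb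

/-- Polar duality optimality: if `x ∈ D`, `z ∈ D'`, `⟨x,z⟩ = 1`, and `(x,z)` is `C`-aligned,
then `x` minimizes `γ_C` over `D` and `z` minimizes `σ_C` over `D'`. -/
theorem polar_duality_optimality {n : ℕ} (C : Set (EuclideanSpace ℝ (Fin n)))
    (hC : IsClosed C) (hCconv : Convex ℝ C) (h0 : (0 : EuclideanSpace ℝ (Fin n)) ∈ C)
    (D : Set (EuclideanSpace ℝ (Fin n)))
    (hD : IsClosed D) (hDconv : Convex ℝ D) (hD0 : (0 : EuclideanSpace ℝ (Fin n)) ∉ D)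
    (x z : EuclideanSpace ℝ (Fin n)) (hx : x ∈ D) (hz : z ∈ antipolar D)
    (hip : ⟪x, z⟫ = 1)
    (halign : ((⟪x, z⟫ : ℝ) : EReal) = gaugeE C x * supportFn C z) :
    (∀ y ∈ D, gaugeE C x ≤ gaugeE C y) ∧ (∀ w ∈ antipolar D, supportFn C z ≤ supportFn C w) :=
  polar_duality_optimality_general C D x z hx hz hip halign
end
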